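/- If C is a storing cell of an axis-aligned square σ, then σ ⊆ 5C, where 5C denotes the square obtained by scaling C by a factor 5 about its center. -/
import Mathlib


open Set

/-- A dyadic cell at level `level` (side length `2^level`) with lower-left corner
`(a·2^level, b·2^level)`. -/
structure DyadicCell where
  level : ℤ
  a : ℤ
  b : ℤ
deriving DecidableEq

/-- The side length of a dyadic cell. -/
noncomputable def DyadicCell.side (C : DyadicCell) : ℝ := 2 ^ C.level

/-- The dyadic cell as a subset of the plane. -/
noncomputable def DyadicCell.toSet (C : DyadicCell) : Set (ℝ × ℝ) :=
  Set.Icc ((C.a : ℝ) * 2 ^ C.level) ((C.a + 1 : ℝ) * 2 ^ C.level) ×ˢ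
    Set.Icc ((C.b : ℝ) * 2 ^ C.level) ((C.b + 1 : ℝ) * 2 ^ C.level)

/-- `5C`: the square obtained by scaling the cell `C` by a factor `5` about its center. -/
noncomputable def DyadicCell.scale5 (C : DyadicCell) : Set (ℝ × ℝ) :=
  Set.Icc ((C.a - 2 : ℝ) * 2 ^ C.level) ((C.a + 3 : ℝ) * 2 ^ C.level) ×ˢ
    Set.Icc ((C.b - 2 : ℝ) * 2 ^ C.level) ((C.b + 3 : ℝ) * 2 ^ C.level)

/-- An axis-aligned square `[x, x+s] × [y, y+s]` of side length `s > 0`. -/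
structure Square where
  x : ℝ
  y : ℝ
  s : ℝ
  s_pos : 0 < s

/-- The square as a subset of the plane. -/
noncomputable def Square.toSet (σ : Square) : Set (ℝ × ℝ) :=
  Set.Icc σ.x (σ.x + σ.s) ×ˢ Set.Icc σ.y (σ.y + σ.s)

/-- The center of a square. -/
noncomputable def Square.center (σ : Square) : ℝ × ℝ := (σ.x + σ.s / 2, σ.y + σ.s / 2)

/-- `C` is a storing cell of `σ`: a dyadic cell of maximal side length among those that
contain the center of `σ` and are contained in `σ`. -/
def IsStoringCell (σ : Square) (C : DyadicCell) : Prop :=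
  σ.center ∈ C.toSet ∧ C.toSet ⊆ σ.toSet ∧
    ∀ D : DyadicCell, σ.center ∈ D.toSet → D.toSet ⊆ σ.toSet → D.side ≤ C.side

set_option maxHeartbeats 1000000 in
theorem statement2 (σ : Square) (C : DyadicCell) (h : IsStoringCell σ C) :
    σ.toSet ⊆ C.scale5 := by
  obtain ⟨hcen, hsub, hmax⟩ := h
  set t : ℝ := (2:ℝ) ^ C.level with ht
  have ht0 : (0:ℝ) < t := by positivity
  have hs0 := σ.s_pos
  have hs2 : (0:ℝ) < σ.s / 2 := by linarith
  set m : ℤ := Int.log 2 (σ.s / 2) with hm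
  set u : ℝ := (2:ℝ) ^ m with hu
  have hu0 : (0:ℝ) < u := by positivity
  have hule : u ≤ σ.s / 2 := by
    have h0 := Int.zpow_log_le_self (b := 2) one_lt_two hs2
    rw [hu, hm]
    push_cast at h0
    exact h0
  have hugt : σ.s / 2 < 2 * u := by
    have h1 := Int.lt_zpow_succ_log_self (b := 2) one_lt_two (σ.s / 2)
    push_cast at h1
    rw [zpow_add_one₀ (by norm_num : (2:ℝ) ≠ 0)] at h1
    rw [hu, hm]; linarith
  set cx : ℝ := σ.x + σ.s / 2 with hcx
  set cy : ℝ := σ.y + σ.s / 2 with hcy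
  set D : DyadicCell := ⟨m, ⌊cx / u⌋, ⌊cy / u⌋⟩ with hD
  have hfloor : ∀ z : ℝ, (⌊z / u⌋ : ℝ) * u ≤ z ∧ z ≤ ((⌊z / u⌋ : ℝ) + 1) * u := by
    intro z
    constructor
    · have := Int.floor_le (z / u)
      calc (⌊z / u⌋ : ℝ) * u ≤ (z / u) * u := by nlinarith
        _ = z := by field_simp
    · have := (Int.lt_floor_add_one (z / u)).le
      calc z = (z / u) * u := by field_simp
        _ ≤ ((⌊z / u⌋ : ℝ) + 1) * u := by nlinarith
  have hcmem : σ.center ∈ D.toSet := by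
    simp only [DyadicCell.toSet, Square.center, Set.mem_prod, Set.mem_Icc, hD]
    have h1 := hfloor cx
    have h2 := hfloor cy
    exact ⟨⟨h1.1, h1.2⟩, ⟨h2.1, h2.2⟩⟩
  have hDsub : D.toSet ⊆ σ.toSet := by
    intro p hp
    simp only [DyadicCell.toSet, Set.mem_prod, Set.mem_Icc, hD] at hp
    obtain ⟨⟨p1l, p1r⟩, ⟨p2l, p2r⟩⟩ := hp
    have h1 := hfloor cx
    have h2 := hfloor cy
    simp only [Square.toSet, Set.mem_prod, Set.mem_Icc]
    constructor
    · constructor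
      · nlinarith [h1.1, h1.2]
      · nlinarith [h1.1, h1.2]
    · constructor
      · nlinarith [h2.1, h2.2]
      · nlinarith [h2.1, h2.2]
  have hut : u ≤ t := hmax D hcmem hDsub
  have hst : σ.s < 4 * t := by linarith
  simp only [DyadicCell.toSet, Square.center, Set.mem_prod, Set.mem_Icc] at hcen
  obtain ⟨⟨ha1, ha2⟩, ⟨hb1, hb2⟩⟩ := hcen
  intro p hp
  simp only [Square.toSet, Set.mem_prod, Set.mem_Icc] at hp
  obtain ⟨⟨p1l, p1r⟩, ⟨p2l, p2r⟩⟩ := hp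
  simp only [DyadicCell.scale5, Set.mem_prod, Set.mem_Icc]
  refine ⟨⟨?_, ?_⟩, ⟨?_, ?_⟩⟩ <;> nlinarith
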